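/- arXiv:1411.3797 — 3 statements merged into one kernel-verified Lean document; each statement's English description precedes it below -/
import Mathlib

section
/- The killing-form invariant Δ₁ of the heat-equation symmetry algebra is invariant under the full adjoint action: for every a = (a₁,…,a₆) ∈ ℝ⁶ and all real ε₁,…,ε₆, writing ã = a·A(ε₁,…,ε₆), one has Δ₁(ã) = Δ₁(a), i.e. ã₄² − 4ã₂ã₆ = a₄² − 4a₂a₆. -/
open Real Matrix

/-- separate adjoint action matrix of v₁ -/
noncomputable def A1 (e : ℝ) : Matrix (Fin 6) (Fin 6) ℝ :=
  !![1, 0, 0, 0, 0, 0;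
     0, 1, 0, 0, 0, 0;
     0, 0, 1, 0, 0, 0;
     -e, 0, 0, 1, 0, 0;
     0, 0, e, 0, 1, 0;
     0, 0, e ^ 2, 0, -2 * e, 1]

/-- separate adjoint action matrix of v₂ -/
noncomputable def A2 (e : ℝ) : Matrix (Fin 6) (Fin 6) ℝ :=
  !![1, 0, 0, 0, 0, 0;
     0, 1, 0, 0, 0, 0;
     0, 0, 1, 0, 0, 0;
     0, -2 * e, 0, 1, 0, 0;
     -2 * e, 0, 0, 0, 1, 0;
     0, 4 * e ^ 2, 2 * e, -4 * e, 0, 1]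

/-- separate adjoint action matrix of v₃ (the identity) -/
noncomputable def A3 (_e : ℝ) : Matrix (Fin 6) (Fin 6) ℝ := 1

/-- separate adjoint action matrix of v₄ -/
noncomputable def A4 (e : ℝ) : Matrix (Fin 6) (Fin 6) ℝ :=
  !![exp e, 0, 0, 0, 0, 0;
     0, exp (2 * e), 0, 0, 0, 0;
     0, 0, 1, 0, 0, 0;
     0, 0, 0, 1, 0, 0;
     0, 0, 0, 0, exp (-e), 0;
     0, 0, 0, 0, 0, exp (-2 * e)]

/-- separate adjoint action matrix of v₅ -/
noncomputable def A5 (e : ℝ) : Matrix (Fin 6) (Fin 6) ℝ :=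
  !![1, 0, -e, 0, 0, 0;
     2 * e, 1, -e ^ 2, 0, 0, 0;
     0, 0, 1, 0, 0, 0;
     0, 0, 0, 1, e, 0;
     0, 0, 0, 0, 1, 0;
     0, 0, 0, 0, 0, 1]

/-- separate adjoint action matrix of v₆ -/
noncomputable def A6 (e : ℝ) : Matrix (Fin 6) (Fin 6) ℝ :=
  !![1, 0, 0, 0, 2 * e, 0;
     0, 1, -2 * e, 4 * e, 0, 4 * e ^ 2;
     0, 0, 1, 0, 0, 0;
     0, 0, 0, 1, 0, 2 * e;
     0, 0, 0, 0, 1, 0;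
     0, 0, 0, 0, 0, 1]

/-- the general adjoint transformation matrix of the heat-equation symmetry algebra -/
noncomputable def A (e1 e2 e3 e4 e5 e6 : ℝ) : Matrix (Fin 6) (Fin 6) ℝ :=
  A4 e4 * A5 e5 * A3 e3 * A1 e1 * A2 e2 * A6 e6

/-- the killing-form invariant Δ₁ = a₄² − 4a₂a₆ -/
def Delta1 (a : Fin 6 → ℝ) : ℝ := (a 3) ^ 2 - 4 * a 1 * a 5

/-- the cubic invariant Δ₂ -/
def Delta2 (a : Fin 6 → ℝ) : ℝ :=
  (a 3) ^ 3 + 2 * a 2 * (a 3) ^ 2 - 4 * a 1 * a 3 * a 5 + 2 * a 0 * a 3 * a 4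
    - 8 * a 1 * a 2 * a 5 - 2 * a 1 * (a 4) ^ 2 - 2 * (a 0) ^ 2 * a 5

lemma cv6 (x : ℝ) (f : Fin 5 → ℝ) : Matrix.vecCons x f 5 = f 4 := rfl
lemma cv5 (x : ℝ) (f : Fin 4 → ℝ) : Matrix.vecCons x f 4 = f 3 := rfl
lemma cv4 (x : ℝ) (f : Fin 3 → ℝ) : Matrix.vecCons x f 3 = f 2 := rfl
lemma cv3 (x : ℝ) (f : Fin 2 → ℝ) : Matrix.vecCons x f 2 = f 1 := rfl
lemma cv2 (x : ℝ) (f : Fin 1 → ℝ) : Matrix.vecCons x f 1 = f 0 := rfl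
lemma cv1 (x : ℝ) (f : Fin 0 → ℝ) : Matrix.vecCons x f 0 = x := rfl

lemma vec6_0 (x0 x1 x2 x3 x4 x5 : ℝ) : ![x0,x1,x2,x3,x4,x5] 0 = x0 := rfl
lemma vec6_1 (x0 x1 x2 x3 x4 x5 : ℝ) : ![x0,x1,x2,x3,x4,x5] 1 = x1 := rfl
lemma vec6_2 (x0 x1 x2 x3 x4 x5 : ℝ) : ![x0,x1,x2,x3,x4,x5] 2 = x2 := rfl
lemma vec6_3 (x0 x1 x2 x3 x4 x5 : ℝ) : ![x0,x1,x2,x3,x4,x5] 3 = x3 := rfl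
lemma vec6_4 (x0 x1 x2 x3 x4 x5 : ℝ) : ![x0,x1,x2,x3,x4,x5] 4 = x4 := rfl
lemma vec6_5 (x0 x1 x2 x3 x4 x5 : ℝ) : ![x0,x1,x2,x3,x4,x5] 5 = x5 := rfl

lemma d1_A1 (a : Fin 6 → ℝ) (e : ℝ) : Delta1 (Matrix.vecMul a (A1 e)) = Delta1 a := by
  simp [Delta1, A1, Matrix.vecMul, dotProduct, Fin.sum_univ_six, vec6_0, vec6_1, vec6_2, vec6_3, vec6_4, vec6_5, cv6, cv5, cv4, cv3, cv2, cv1, Matrix.vecHead, Matrix.vecTail]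
  try ring

lemma d1_A2 (a : Fin 6 → ℝ) (e : ℝ) : Delta1 (Matrix.vecMul a (A2 e)) = Delta1 a := by
  simp [Delta1, A2, Matrix.vecMul, dotProduct, Fin.sum_univ_six, vec6_0, vec6_1, vec6_2, vec6_3, vec6_4, vec6_5, cv6, cv5, cv4, cv3, cv2, cv1, Matrix.vecHead, Matrix.vecTail]
  try ring

lemma d1_A5 (a : Fin 6 → ℝ) (e : ℝ) : Delta1 (Matrix.vecMul a (A5 e)) = Delta1 a := by
  simp [Delta1, A5, Matrix.vecMul, dotProduct, Fin.sum_univ_six, vec6_0, vec6_1, vec6_2, vec6_3, vec6_4, vec6_5, cv6, cv5, cv4, cv3, cv2, cv1, Matrix.vecHead, Matrix.vecTail]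
  try ring

lemma d1_A6 (a : Fin 6 → ℝ) (e : ℝ) : Delta1 (Matrix.vecMul a (A6 e)) = Delta1 a := by
  simp [Delta1, A6, Matrix.vecMul, dotProduct, Fin.sum_univ_six, vec6_0, vec6_1, vec6_2, vec6_3, vec6_4, vec6_5, cv6, cv5, cv4, cv3, cv2, cv1, Matrix.vecHead, Matrix.vecTail]
  try ring

lemma d1_A4 (a : Fin 6 → ℝ) (e : ℝ) : Delta1 (Matrix.vecMul a (A4 e)) = Delta1 a := by
  simp [Delta1, A4, Matrix.vecMul, dotProduct, Fin.sum_univ_six, vec6_0, vec6_1, vec6_2, vec6_3, vec6_4, vec6_5, cv6, cv5, cv4, cv3, cv2, cv1, Matrix.vecHead, Matrix.vecTail]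
  have h : Real.exp (2*e) * Real.exp (-(2*e)) = 1 := by
    rw [← Real.exp_add]; simp
  linear_combination (4 * a 1 * a 5) * h

theorem heat_Delta1_invariant (a : Fin 6 → ℝ) (e1 e2 e3 e4 e5 e6 : ℝ) :
    Delta1 (Matrix.vecMul a (A e1 e2 e3 e4 e5 e6)) = Delta1 a := by
  unfold A
  show Delta1 (Matrix.vecMul a (A4 e4 * A5 e5 * A3 e3 * A1 e1 * A2 e2 * A6 e6)) = _
  rw [← Matrix.vecMul_vecMul, ← Matrix.vecMul_vecMul, ← Matrix.vecMul_vecMul,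
    ← Matrix.vecMul_vecMul, ← Matrix.vecMul_vecMul]
  rw [d1_A6, d1_A2, d1_A1, show A3 e3 = 1 from rfl, Matrix.vecMul_one, d1_A5, d1_A4]
end

section
/- Heat equation, case a₂ = a₄ = a₆ = 0 with a₅ ≠ 0: for all real a₁, a₃, a₅ with a₅ ≠ 0, there exist real ε₁,…,ε₆ such that (a₁, 0, a₃, 0, a₅, 0)·A(ε₁,…,ε₆) = (1, 0, 0, 0, 0, 0); that is, a₁v₁ + a₃v₃ + a₅v₅ with a₅ ≠ 0 is adjoint-equivalent to v₁. -/
open Real Matrix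

lemma cons_val_five' {α : Type*} (x0 x1 x2 x3 x4 x5 : α) :
    ![x0, x1, x2, x3, x4, x5] 5 = x5 := by rfl

theorem heat_case_a5_ne_zero (a1 a3 a5 : ℝ) (ha5 : a5 ≠ 0) :
    ∃ e1 e2 e3 e4 e5 e6 : ℝ,
      Matrix.vecMul ![a1, 0, a3, 0, a5, 0] (A e1 e2 e3 e4 e5 e6) =
        ![1, 0, 0, 0, 0, 0] := by
  refine ⟨-a3 / a5, (a1 - 1) / (2 * a5), 0, 0, 0, -a5 / 2, ?_⟩
  funext i
  fin_cases i <;>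
    · simp [A, A1, A2, A3, A4, A5, A6, Matrix.vecMul, Matrix.mul_apply,
        dotProduct, Fin.sum_univ_succ, Real.exp_zero, cons_val_five']
      try field_simp
      try simp
      try ring
end

section
/- Inequivalence of ω₄ = (1/4)v₃ + v₆ and ω₅ = (1/4)v₃ − v₆ in the heat-equation symmetry algebra: there exist no real ε₁,…,ε₆ and nonzero real constant c such that (0, 0, 1/4, 0, 0, 1)·A(ε₁,…,ε₆) = c·(0, 0, 1/4, 0, 0, −1). -/
open Real Matrix

@[simp] lemma cons_val_five'_s19 {α : Type*} {m : ℕ} (x : α) (u : Fin (m + 5) → α) :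
    Matrix.vecCons x u 5 =
      Matrix.vecHead (Matrix.vecTail (Matrix.vecTail (Matrix.vecTail (Matrix.vecTail u)))) :=
  rfl

set_option maxHeartbeats 2000000 in
theorem heat_omega4_omega5_inequivalent :
    ¬ ∃ (e1 e2 e3 e4 e5 e6 c : ℝ), c ≠ 0 ∧
        Matrix.vecMul ![0, 0, 1 / 4, 0, 0, 1] (A e1 e2 e3 e4 e5 e6) =
          c • ![0, 0, 1 / 4, 0, 0, -1] := by
  rintro ⟨e1, e2, e3, e4, e5, e6, c, hc, h⟩
  have h1 := congrFun h 1
  have h2 := congrFun h 2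
  have h5 := congrFun h 5
  simp [A, A1, A2, A3, A4, A5, A6, Matrix.vecMul, Matrix.mul_apply, dotProduct,
    Fin.sum_univ_six, Matrix.cons_val_zero, Matrix.cons_val_one, Matrix.head_cons,
    Matrix.cons_val_four, cons_val_five'_s19, Matrix.cons_val_succ, Matrix.vecHead, Matrix.vecTail] at h1 h2 h5
  have hk : (0:ℝ) < Real.exp (-(2*e4)) := Real.exp_pos _
  subst h1
  nlinarith [hk, mul_nonneg hk.le (sq_nonneg e1), h2, h5]
end
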